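/- Let Γ be a monoid of class 𝒞 with finite generating set G, let S₀ ⊆ Γ be a finite subset with gcd_l(S₀) = e and L := max{l(u) : u ∈ S₀}, and let A(n) denote the number of subsets of Γₙ of the form g·S₀ for some g ∈ Γ. Then the generating series Σₙ A(n)tⁿ equals t^L · Σₙ #Γₙ tⁿ in ℤ[[t]]; equivalently, A(n) = 0 for n < L and A(n) = #Γ_{n−L} for n ≥ L. -/
import Mathlib


/-- `d` left-divides `u`. -/
def LeftDvd {M : Type*} [Monoid M] (d u : M) : Prop := ∃ x : M, u = d * x

private lemma leftdvd_trans {M : Type*} [Monoid M] {a b c : M}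
    (h1 : LeftDvd a b) (h2 : LeftDvd b c) : LeftDvd a c := by
  obtain ⟨x, rfl⟩ := h1; obtain ⟨y, rfl⟩ := h2
  exact ⟨x * y, mul_assoc a x y⟩

/-- The pair gcd, with its universal property stable under left translation. -/
private lemma gcd_pair_trans {M : Type*} [CancelMonoid M]
    (hGCDl : ∀ u v : M, ∃! d : M, LeftDvd d u ∧ LeftDvd d v ∧
      ∀ w : M, LeftDvd w u → LeftDvd w v → LeftDvd w d)
    (u v : M) : ∃ d : M, LeftDvd d u ∧ LeftDvd d v ∧
      ∀ g w : M, LeftDvd w (g * u) → LeftDvd w (g * v) → LeftDvd w (g * d) := by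
  obtain ⟨d, ⟨hdu, hdv, hmax⟩, -⟩ := hGCDl u v
  refine ⟨d, hdu, hdv, fun g w hwu hwv => ?_⟩
  obtain ⟨e, ⟨⟨p, hp⟩, ⟨q, hq⟩, hemax⟩, -⟩ := hGCDl (g * u) (g * v)
  obtain ⟨c, rfl⟩ : LeftDvd g e := hemax g ⟨u, rfl⟩ ⟨v, rfl⟩
  have hcu : LeftDvd c u := ⟨p, mul_left_cancel (by rw [hp, mul_assoc])⟩
  have hcv : LeftDvd c v := ⟨q, mul_left_cancel (by rw [hq, mul_assoc])⟩
  obtain ⟨y, hy⟩ := hmax c hcu hcv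
  obtain ⟨z, hz⟩ := hemax w hwu hwv
  exact ⟨z * y, by rw [hy, ← mul_assoc, hz, mul_assoc]⟩

/-- Finite nonempty gcd, with the universal property stable under left translation. -/
private lemma gcd_finset {M : Type*} [CancelMonoid M]
    (hGCDl : ∀ u v : M, ∃! d : M, LeftDvd d u ∧ LeftDvd d v ∧
      ∀ w : M, LeftDvd w u → LeftDvd w v → LeftDvd w d)
    (S : Finset M) (hS : S.Nonempty) : ∃ d : M, (∀ s ∈ S, LeftDvd d s) ∧
      ∀ g w : M, (∀ s ∈ S, LeftDvd w (g * s)) → LeftDvd w (g * d) := by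
  induction hS using Finset.Nonempty.cons_induction with
  | singleton a =>
      refine ⟨a, fun s hs => ?_, fun g w h => h a (Finset.mem_singleton_self a)⟩
      rw [Finset.mem_singleton] at hs
      subst hs
      exact ⟨1, (mul_one _).symm⟩
  | cons a S ha hS IH =>
      obtain ⟨dS, hdS1, hdS2⟩ := IH
      obtain ⟨d, hda, hddS, htrans⟩ := gcd_pair_trans hGCDl a dS
      refine ⟨d, ?_, ?_⟩
      · intro s hs
        rcases Finset.mem_cons.mp hs with rfl | hs
        · exact hda
        · exact leftdvd_trans hddS (hdS1 s hs)
      · intro g w h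
        exact htrans g w (h a (Finset.mem_cons_self a S))
          (hdS2 g w fun s hs => h s (Finset.mem_cons.mpr (Or.inr hs)))

open PowerSeries in
/-- For a monoid of class 𝒞 and a minimal representative `S₀` with
`L = max{l(u) : u ∈ S₀}`, the counting series of left translates of `S₀` inside the
balls equals `t^L` times the growth series; equivalently `A(n) = 0` for `n < L` and
`A(n) = #Γ_{n−L}` for `n ≥ L`. -/
theorem stmt_14 {M : Type*} [CancelMonoid M] [DecidableEq M] (G : Finset M)
    (hgen : ∀ g : M, ∃ w : List M, (∀ x ∈ w, x ∈ G) ∧ w.prod = g)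
    (l : M → ℕ)
    (hl : ∀ g : M, l g =
      sInf {n : ℕ | ∃ w : List M, (∀ x ∈ w, x ∈ G) ∧ w.length = n ∧ w.prod = g})
    (hadd : ∀ g h : M, l (g * h) = l g + l h)
    (hGCDl : ∀ u v : M, ∃! d : M, LeftDvd d u ∧ LeftDvd d v ∧
      ∀ w : M, LeftDvd w u → LeftDvd w v → LeftDvd w d)
    (hCMr : ∀ u v : M, ∃ a b : M, a * u = b * v)
    (S₀ : Finset M) (hS₀ : S₀.Nonempty)
    (hgcd : ∀ w : M, (∀ s ∈ S₀, LeftDvd w s) → w = 1)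
    (L : ℕ) (hL : L = S₀.sup l)
    (A : ℕ → ℕ)
    (hA : ∀ n, A n = Set.ncard {T : Finset M |
      (∃ g : M, T = S₀.image (fun s => g * s)) ∧ ∀ x ∈ T, l x ≤ n}) :
    PowerSeries.mk (fun n => (A n : ℤ)) =
      X ^ L * PowerSeries.mk (fun n => (Set.ncard {g : M | l g ≤ n} : ℤ)) ∧
    (∀ n, n < L → A n = 0) ∧
    (∀ n, L ≤ n → A n = Set.ncard {g : M | l g ≤ n - L}) := by
  -- basic length facts
  have l1 : l 1 = 0 := by have := hadd 1 1; rw [mul_one] at this; omega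
  have lzero : ∀ x : M, l x = 0 → x = 1 := by
    intro x hx
    rw [hl x] at hx
    rcases Nat.sInf_eq_zero.mp hx with h0 | hemp
    · obtain ⟨w, -, hlen, hprod⟩ := h0
      rw [List.length_eq_zero_iff] at hlen
      subst hlen; simpa using hprod.symm
    · obtain ⟨w, hw1, hw2⟩ := hgen x
      exact absurd hemp (Set.nonempty_iff_ne_empty.mp ⟨w.length, w, hw1, rfl, hw2⟩)
  -- the universal property of translates of S₀
  obtain ⟨d₀, hd₀1, hd₀2⟩ := gcd_finset hGCDl S₀ hS₀
  have hd₀ : d₀ = 1 := hgcd d₀ hd₀1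
  have huniv : ∀ g w : M, (∀ s ∈ S₀, LeftDvd w (g * s)) → LeftDvd w g := by
    intro g w h
    have := hd₀2 g w h
    rwa [hd₀, mul_one] at this
  -- the translation map and its injectivity
  set F : M → Finset M := fun g => S₀.image (fun s => g * s) with hF
  have hFinj : Function.Injective F := by
    intro g g' hgg'
    have key : ∀ a b : M, F a = F b → LeftDvd b a := by
      intro a b hab
      refine huniv a b (fun s hs => ?_)
      have : a * s ∈ F b := by rw [← hab]; exact Finset.mem_image_of_mem _ hs
      obtain ⟨s', -, hs'⟩ := Finset.mem_image.mp this
      exact ⟨s', hs'.symm⟩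
    obtain ⟨x, hx⟩ := key g g' hgg'
    obtain ⟨y, hy⟩ := key g' g hgg'.symm
    have hyx : y * x = 1 := by
      have : g * (y * x) = g * 1 := by rw [mul_one, ← mul_assoc, ← hy, ← hx]
      exact mul_left_cancel this
    have : l y + l x = 0 := by rw [← hadd, hyx, l1]
    have hx1 : x = 1 := lzero x (by omega)
    rw [hx, hx1, mul_one]
  -- the maximal-length element of S₀
  obtain ⟨smax, hsmax, hsmaxL⟩ := Finset.exists_mem_eq_sup S₀ hS₀ l
  rw [← hL] at hsmaxL
  -- A n = 0 for n < L
  have hA0 : ∀ n, n < L → A n = 0 := by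
    intro n hn
    rw [hA n]
    convert Set.ncard_empty (Finset M)
    ext T
    simp only [Set.mem_setOf_eq, Set.mem_empty_iff_false, iff_false, not_and]
    rintro ⟨g, rfl⟩ hall
    have hmem : g * smax ∈ S₀.image (fun s => g * s) := Finset.mem_image_of_mem _ hsmax
    have := hall _ hmem
    rw [hadd, ← hsmaxL] at this
    omega
  -- A n = ball count for n ≥ L
  have hA1 : ∀ n, L ≤ n → A n = Set.ncard {g : M | l g ≤ n - L} := by
    intro n hn
    rw [hA n]
    have hset : {T : Finset M |
        (∃ g : M, T = S₀.image (fun s => g * s)) ∧ ∀ x ∈ T, l x ≤ n} =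
        F '' {g : M | l g ≤ n - L} := by
      ext T
      simp only [Set.mem_setOf_eq, Set.mem_image]
      constructor
      · rintro ⟨⟨g, rfl⟩, hall⟩
        refine ⟨g, ?_, rfl⟩
        have hmem : g * smax ∈ S₀.image (fun s => g * s) := Finset.mem_image_of_mem _ hsmax
        have := hall _ hmem
        rw [hadd, ← hsmaxL] at this
        show l g ≤ n - L
        omega
      · rintro ⟨g, hg, rfl⟩
        replace hg : l g ≤ n - L := hg
        refine ⟨⟨g, rfl⟩, ?_⟩
        intro x hx
        obtain ⟨s, hs, rfl⟩ := Finset.mem_image.mp hx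
        rw [hadd]
        have hsL : l s ≤ L := hL ▸ Finset.le_sup hs
        omega
    rw [hset, Set.ncard_image_of_injective _ hFinj]
  refine ⟨?_, hA0, hA1⟩
  ext n
  rw [mul_comm, PowerSeries.coeff_mk, PowerSeries.coeff_mul_X_pow', PowerSeries.coeff_mk]
  split_ifs with h
  · rw [hA1 n h]
  · norm_num [hA0 n (by omega)]
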